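/- For 0 < q < 1 and any real a with aq² ≠ 1 (so denominators are nonzero), the series η₀(a;q) := ∑_{n=0}^∞ (-1)^n q^{n(n-1)/2} · ((1 - aq^{2n+1})/(1 - aq)) · ((aq;q)_n/(q;q)_n) converges and equals 0. -/

import Mathlib

/-!
The series telescopes: its `N`-th partial sum is
`s N = (-1)^N q^{N(N+1)/2} (aq²;q)_N / (q;q)_N`, i.e. the terms satisfy `t 0 = s 0` and
`t (n+1) = s (n+1) - s n`. The ratio `s (n+1) / s n = -q^{n+1}(1 - aq^{n+2}) / (1 - q^{n+1})`
tends to `0`, so `s` is summable by the ratio test, and then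
`∑ t = s 0 + (∑ s - s 0) - ∑ s = 0`.
-/

/-- The finite q-Pochhammer symbol `(x;q)_n = ∏_{k=0}^{n-1} (1 - x q^k)`. -/
noncomputable def qp (q x : ℝ) (n : ℕ) : ℝ := ∏ k ∈ Finset.range n, (1 - x * q ^ k)

open Filter Topology

theorem Summable.hasSum_succ_sub {G : Type*} [AddCommGroup G] [TopologicalSpace G]
    [IsTopologicalAddGroup G] {f : ℕ → G} (hf : Summable f) :
    HasSum (fun n => f (n + 1) - f n) (-f 0) := by
  have hshift : HasSum (fun n => f (n + 1)) (∑' n, f n - f 0) := by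
    simpa using (hasSum_nat_add_iff' 1).mpr hf.hasSum
  simpa using hshift.sub hf.hasSum

theorem summable_of_norm_succ_le_mul_tendsto_zero {E : Type*} [SeminormedAddCommGroup E]
    [CompleteSpace E] {f : ℕ → E} {ρ : ℕ → ℝ} (hρ : Tendsto ρ atTop (𝓝 0))
    (hf : ∀ n, ‖f (n + 1)‖ ≤ ‖ρ n‖ * ‖f n‖) : Summable f := by
  refine summable_of_ratio_norm_eventually_le (r := 1 / 2) (by norm_num) ?_
  filter_upwards [hρ.norm.eventually_le_const (by norm_num : ‖(0 : ℝ)‖ < 1 / 2)] with n hn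
  exact (hf n).trans (by gcongr)

theorem qp_succ (q x : ℝ) (n : ℕ) : qp q x (n + 1) = qp q x n * (1 - x * q ^ n) :=
  Finset.prod_range_succ _ n

theorem qp_succ' (q x : ℝ) (n : ℕ) : qp q x (n + 1) = (1 - x) * qp q (x * q) n := by
  rw [qp, Finset.prod_range_succ', mul_comm]
  simp [qp, pow_succ', mul_assoc]

theorem qp_self_pos {q : ℝ} (hq0 : 0 ≤ q) (hq1 : q < 1) (n : ℕ) : 0 < qp q q n :=
  Finset.prod_pos fun k _ => by
    have : q * q ^ k < 1 := by
      calc q * q ^ k ≤ q * 1 := by gcongr; exact pow_le_one₀ hq0 hq1.le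
        _ < 1 := by linarith
    linarith

theorem succ_mul_succ_add_one_div_two (n : ℕ) :
    (n + 1) * (n + 1 + 1) / 2 = n * (n + 1) / 2 + (n + 1) := by
  rw [show (n + 1) * (n + 1 + 1) = n * (n + 1) + 2 * (n + 1) by ring,
    Nat.add_mul_div_left _ _ two_pos]

noncomputable def etaZeroTerm (q a : ℝ) (n : ℕ) : ℝ :=
  (-1 : ℝ) ^ n * q ^ (n * (n - 1) / 2) * ((1 - a * q ^ (2 * n + 1)) / (1 - a * q)) *
    (qp q (a * q) n / qp q q n)

noncomputable def etaZeroPartialSum (q a : ℝ) (n : ℕ) : ℝ :=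
  (-1 : ℝ) ^ n * q ^ (n * (n + 1) / 2) * qp q (a * q ^ 2) n / qp q q n

section

variable {q : ℝ} (a : ℝ)

theorem etaZeroPartialSum_succ (hq0 : 0 ≤ q) (hq1 : q < 1) (n : ℕ) :
    etaZeroPartialSum q a (n + 1) =
      etaZeroPartialSum q a n * (-q ^ (n + 1) * (1 - a * q ^ (n + 2)) / (1 - q ^ (n + 1))) := by
  have hD := (qp_self_pos hq0 hq1 n).ne'
  have hD' : 1 - q ^ (n + 1) ≠ 0 := (sub_pos.2 (pow_lt_one₀ hq0 hq1 n.succ_ne_zero)).ne'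
  rw [etaZeroPartialSum, etaZeroPartialSum, succ_mul_succ_add_one_div_two, qp_succ, qp_succ,
    ← pow_succ']
  field_simp
  ring

theorem tendsto_etaZeroPartialSum_ratio (hq0 : 0 ≤ q) (hq1 : q < 1) :
    Tendsto (fun n : ℕ => -q ^ (n + 1) * (1 - a * q ^ (n + 2)) / (1 - q ^ (n + 1)))
      atTop (𝓝 0) := by
  have hpow := tendsto_pow_atTop_nhds_zero_of_lt_one hq0 hq1
  have h1 : Tendsto (fun n : ℕ => q ^ (n + 1)) atTop (𝓝 0) :=
    hpow.comp (tendsto_add_atTop_nat 1)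
  have h2 : Tendsto (fun n : ℕ => q ^ (n + 2)) atTop (𝓝 0) :=
    hpow.comp (tendsto_add_atTop_nat 2)
  have hlim := (h1.neg.mul ((h2.const_mul a).const_sub 1)).div (h1.const_sub 1) (by norm_num)
  rwa [neg_zero, zero_mul, zero_div] at hlim

theorem summable_etaZeroPartialSum (hq0 : 0 ≤ q) (hq1 : q < 1) :
    Summable (etaZeroPartialSum q a) :=
  summable_of_norm_succ_le_mul_tendsto_zero (tendsto_etaZeroPartialSum_ratio a hq0 hq1)
    fun n => by rw [etaZeroPartialSum_succ a hq0 hq1, norm_mul, mul_comm]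

theorem etaZeroTerm_zero (haq : a * q ≠ 1) : etaZeroTerm q a 0 = etaZeroPartialSum q a 0 := by
  simp [etaZeroTerm, etaZeroPartialSum, qp, sub_ne_zero.2 haq.symm]

theorem etaZeroTerm_succ (hq0 : 0 ≤ q) (hq1 : q < 1) (haq : a * q ≠ 1) (n : ℕ) :
    etaZeroTerm q a (n + 1) = etaZeroPartialSum q a (n + 1) - etaZeroPartialSum q a n := by
  have hexp : (n + 1) * (n + 1 - 1) / 2 = n * (n + 1) / 2 := by rw [Nat.add_sub_cancel, mul_comm]
  have hD := (qp_self_pos hq0 hq1 n).ne'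
  have hD' : 1 - q ^ (n + 1) ≠ 0 := (sub_pos.2 (pow_lt_one₀ hq0 hq1 n.succ_ne_zero)).ne'
  have hA : 1 - a * q ≠ 0 := sub_ne_zero.2 haq.symm
  rw [etaZeroTerm, etaZeroPartialSum, etaZeroPartialSum, hexp, succ_mul_succ_add_one_div_two,
    qp_succ' q (a * q), qp_succ, qp_succ, ← pow_succ', show a * q * q = a * q ^ 2 by ring]
  field_simp
  ring

end

theorem eta_zero_vanishes_general (q a : ℝ) (hq0 : 0 < q) (hq1 : q < 1) :
    HasSum (fun n : ℕ =>
        (-1 : ℝ) ^ n * q ^ (n * (n - 1) / 2) *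
          ((1 - a * q ^ (2 * n + 1)) / (1 - a * q)) *
          (qp q (a * q) n / qp q q n))
      0 := by
  by_cases haq : a * q = 1
  · simp [haq] -- every term divides by `1 - a * q = 0`
  show HasSum (etaZeroTerm q a) 0
  refine (hasSum_nat_add_iff' 1).mp ?_
  rw [Finset.sum_range_one, zero_sub, etaZeroTerm_zero a haq,
    funext (etaZeroTerm_succ a hq0.le hq1 haq)]
  exact (summable_etaZeroPartialSum a hq0.le hq1).hasSum_succ_sub

/-- `η₀(a;q) = ∑_{n≥0} (-1)^n q^{n(n-1)/2} ((1-aq^{2n+1})/(1-aq)) ((aq;q)_n/(q;q)_n)`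
converges and equals 0. -/
theorem eta_zero_vanishes (q a : ℝ) (hq0 : 0 < q) (hq1 : q < 1)
    (h : a * q ^ 2 ≠ 1) :
    HasSum (fun n : ℕ =>
        (-1 : ℝ) ^ n * q ^ (n * (n - 1) / 2) *
          ((1 - a * q ^ (2 * n + 1)) / (1 - a * q)) *
          (qp q (a * q) n / qp q q n))
      0 :=
  eta_zero_vanishes_general q a hq0 hq1
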